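/- Derivative bounds for χ, uniform in C₁ (used in the proof of Lemma 5.2): Let T > 0, Ã > 0 and C₁ > 0, and set t₁ := max(T − Ã/C₁, 0). There exists a constant C > 0 depending only on Ã and the dimension n (in particular independent of C₁) such that for all t ∈ [t₁, T] and all x ∈ ℝⁿ: |Dχ(t,x)| ≤ C χ(t,x) ψ(x)^{1/2} / (|x|²+1)^{1/2} and ‖D²χ(t,x)‖ ≤ C χ(t,x) ψ(x) / (|x|²+1), where Dχ and D²χ denote the gradient and the Hessian of χ in the variable x and ‖·‖ the operator norm. -/

import Mathlib

/-!
`χ(t, ·)` is radial: `χ(t, x) = f(‖x‖²)` with `f(r) = exp(a ℓ(r)²)`, `ℓ(r) = log √(r + 1) + 1 ≥ 1`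
and `a = C₁(T − t) + Ã`. For any radial `g(‖x‖²)` the gradient is `2 g'(r) ⟪x, ·⟫` and the Hessian
is `2 g'(r) ⟪·, ·⟫ + 4 g''(r) ⟪x, ·⟫ ⟪x, ·⟫`; here `f' = a f ℓ / (r + 1)` and
`f'' = a f (a ℓ² + 1/2 − ℓ) / (r + 1)²`. Since `ℓ ≥ 1` and `‖x‖ ≤ √(r + 1)`, this gives the bounds
with constants `2a` and `2a(2a + 3)`, and the time window `t ≥ T − Ã/C₁` is exactly what keeps
`a ≤ 2Ã`, whence `C = (4Ã + 3)²` works for every `C₁`.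
-/

open Set

noncomputable section

/-- The state space `ℝⁿ`. -/
abbrev Vec (n : ℕ) := EuclideanSpace ℝ (Fin n)

/-- `ψ(x) = (log((|x|²+1)^{1/2}) + 1)²`. -/
def psi {n : ℕ} (x : Vec n) : ℝ := (Real.log (Real.sqrt (‖x‖ ^ 2 + 1)) + 1) ^ 2

/-- `χ(t,x) = exp((C₁(T−t) + Ã) ψ(x))`. -/
def chi {n : ℕ} (T A C₁ : ℝ) (t : ℝ) (x : Vec n) : ℝ :=
  Real.exp ((C₁ * (T - t) + A) * psi x)

section RadialFunctions

/-- `innerSL ℝ` is typed as conjugate-linear in its first argument, so it cannot be added to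
`ℝ`-bilinear maps such as second derivatives; this is the same map at the `ℝ`-linear type. -/
def realInnerSL (E : Type*) [NormedAddCommGroup E] [InnerProductSpace ℝ E] :
    E →L[ℝ] E →L[ℝ] ℝ :=
  innerSL ℝ

variable {E : Type*} [NormedAddCommGroup E] [InnerProductSpace ℝ E] {g g' : ℝ → ℝ}

theorem hasFDerivAt_comp_norm_sq {x : E} {d : ℝ} (hg : HasDerivAt g d (‖x‖ ^ 2)) :
    HasFDerivAt (fun y => g (‖y‖ ^ 2)) ((2 * d) • innerSL ℝ x) x := by
  refine (hg.comp_hasFDerivAt x (hasStrictFDerivAt_norm_sq x).hasFDerivAt).congr_fderiv ?_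
  ext y
  simp only [smul_apply, smul_eq_mul, nsmul_eq_mul]
  ring

theorem fderiv_comp_norm_sq (hg : ∀ r, 0 ≤ r → HasDerivAt g (g' r) r) :
    fderiv ℝ (fun y : E => g (‖y‖ ^ 2)) = fun y => (2 * g' (‖y‖ ^ 2)) • innerSL ℝ y :=
  funext fun _ => (hasFDerivAt_comp_norm_sq (hg _ (sq_nonneg _))).fderiv

theorem norm_fderiv_comp_norm_sq (hg : ∀ r, 0 ≤ r → HasDerivAt g (g' r) r) (x : E) :
    ‖fderiv ℝ (fun y : E => g (‖y‖ ^ 2)) x‖ = 2 * |g' (‖x‖ ^ 2)| * ‖x‖ := by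
  rw [fderiv_comp_norm_sq hg, norm_smul, innerSL_apply_norm, Real.norm_eq_abs, abs_mul,
    abs_two]

theorem hasFDerivAt_fderiv_comp_norm_sq (hg : ∀ r, 0 ≤ r → HasDerivAt g (g' r) r) {x : E}
    {d : ℝ} (hg' : HasDerivAt g' d (‖x‖ ^ 2)) :
    HasFDerivAt (fderiv ℝ (fun y : E => g (‖y‖ ^ 2)))
      ((2 * g' (‖x‖ ^ 2)) • realInnerSL E
        + ((4 * d) • innerSL ℝ x).smulRight (innerSL ℝ x)) x := by
  rw [fderiv_comp_norm_sq hg]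
  refine ((hasFDerivAt_comp_norm_sq (hg'.const_mul 2)).smul
    (realInnerSL E).hasFDerivAt).congr_fderiv ?_
  rw [show 2 * (2 * d) = 4 * d by ring]
  rfl

theorem norm_fderiv_fderiv_comp_norm_sq_le (hg : ∀ r, 0 ≤ r → HasDerivAt g (g' r) r) {x : E}
    {d : ℝ} (hg' : HasDerivAt g' d (‖x‖ ^ 2)) :
    ‖fderiv ℝ (fderiv ℝ (fun y : E => g (‖y‖ ^ 2))) x‖
      ≤ 2 * |g' (‖x‖ ^ 2)| + 4 * |d| * ‖x‖ ^ 2 := by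
  have hB : ‖realInnerSL E‖ ≤ 1 := norm_innerSL_le (𝕜 := ℝ) (E := E)
  rw [(hasFDerivAt_fderiv_comp_norm_sq hg hg').fderiv]
  calc _ ≤ ‖(2 * g' (‖x‖ ^ 2)) • realInnerSL E‖
        + ‖((4 * d) • innerSL ℝ x).smulRight (innerSL ℝ x)‖ :=
        norm_add_le (E := E →L[ℝ] E →L[ℝ] ℝ) _ _
    _ ≤ |2 * g' (‖x‖ ^ 2)| * ‖realInnerSL E‖ + |4 * d| * ‖x‖ * ‖x‖ := by
      gcongr
      · exact ContinuousLinearMap.opNorm_smul_le _ _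
      · rw [ContinuousLinearMap.norm_smulRight_apply, norm_smul, innerSL_apply_norm,
          Real.norm_eq_abs]
    _ ≤ 2 * |g' (‖x‖ ^ 2)| + 4 * |d| * ‖x‖ ^ 2 := by
      rw [abs_mul 2, abs_mul 4, abs_two, abs_of_pos (four_pos (α := ℝ)), mul_assoc _ ‖x‖, ← sq]
      gcongr ?_ + _
      exact mul_le_of_le_one_right (by positivity) hB

end RadialFunctions

def logWeight (r : ℝ) : ℝ := Real.log (Real.sqrt (r + 1)) + 1

theorem one_le_logWeight {r : ℝ} (hr : 0 ≤ r) : 1 ≤ logWeight r := by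
  have : 0 ≤ Real.log (Real.sqrt (r + 1)) :=
    Real.log_nonneg (Real.one_le_sqrt.mpr (by linarith))
  unfold logWeight
  linarith

theorem hasDerivAt_logWeight {r : ℝ} (hr : -1 < r) :
    HasDerivAt logWeight (1 / (2 * (r + 1))) r := by
  have hr1 : 0 < r + 1 := by linarith
  have hs : 0 < Real.sqrt (r + 1) := Real.sqrt_pos.mpr hr1
  refine ((((hasDerivAt_id' r).add_const 1).sqrt hr1.ne').log hs.ne'
    |>.add_const 1).congr_deriv ?_
  field_simp
  rw [Real.sq_sqrt hr1.le]

/-- `chi T A C₁ t x` unfolds to `chiProfile (C₁ * (T - t) + A) (‖x‖ ^ 2)`, and `psi x` to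
`logWeight (‖x‖ ^ 2) ^ 2`. -/
def chiProfile (a r : ℝ) : ℝ := Real.exp (a * logWeight r ^ 2)

def chiProfileDeriv (a r : ℝ) : ℝ := a * chiProfile a r * logWeight r / (r + 1)

theorem hasDerivAt_chiProfile {a r : ℝ} (hr : -1 < r) :
    HasDerivAt (chiProfile a) (chiProfileDeriv a r) r := by
  have hr1 : r + 1 ≠ 0 := by linarith
  refine (((hasDerivAt_logWeight hr).pow 2).const_mul a).exp.congr_deriv ?_
  simp only [Pi.pow_apply, chiProfileDeriv, chiProfile]
  field_simp
  ring

theorem hasDerivAt_chiProfileDeriv {a r : ℝ} (hr : -1 < r) :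
    HasDerivAt (chiProfileDeriv a)
      (a * chiProfile a r * (a * logWeight r ^ 2 + 1 / 2 - logWeight r) / (r + 1) ^ 2) r := by
  have hr1 : r + 1 ≠ 0 := by linarith
  refine ((((hasDerivAt_chiProfile hr).const_mul a).mul (hasDerivAt_logWeight hr)).div
    ((hasDerivAt_id' r).add_const 1) hr1).congr_deriv ?_
  simp only [Pi.mul_apply, chiProfileDeriv]
  field_simp

section ChiProfileBounds

variable {E : Type*} [NormedAddCommGroup E] [InnerProductSpace ℝ E] {a : ℝ}

theorem chiProfileDeriv_nonneg (ha : 0 ≤ a) {r : ℝ} (hr : 0 ≤ r) : 0 ≤ chiProfileDeriv a r :=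
  div_nonneg (mul_nonneg (mul_nonneg ha (Real.exp_pos _).le) (by linarith [one_le_logWeight hr]))
    (by linarith)

theorem norm_fderiv_chiProfile_le (ha : 0 ≤ a) (x : E) :
    ‖fderiv ℝ (fun y : E => chiProfile a (‖y‖ ^ 2)) x‖
      ≤ 2 * a * chiProfile a (‖x‖ ^ 2) * logWeight (‖x‖ ^ 2) / √(‖x‖ ^ 2 + 1) := by
  have hq : 0 < √(‖x‖ ^ 2 + 1) := by positivity
  have hx : ‖x‖ / (‖x‖ ^ 2 + 1) ≤ 1 / √(‖x‖ ^ 2 + 1) := by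
    have hxq : ‖x‖ ≤ √(‖x‖ ^ 2 + 1) := Real.le_sqrt_of_sq_le (by linarith)
    have hqq : √(‖x‖ ^ 2 + 1) * √(‖x‖ ^ 2 + 1) = ‖x‖ ^ 2 + 1 :=
      Real.mul_self_sqrt (by positivity)
    rw [div_le_div_iff₀ (by positivity) hq, one_mul]
    nlinarith
  have hK : 0 ≤ a * chiProfile a (‖x‖ ^ 2) * logWeight (‖x‖ ^ 2) :=
    mul_nonneg (mul_nonneg ha (Real.exp_pos _).le)
      (by linarith [one_le_logWeight (sq_nonneg ‖x‖)])
  rw [norm_fderiv_comp_norm_sq (fun r hr => hasDerivAt_chiProfile (by linarith)),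
    abs_of_nonneg (chiProfileDeriv_nonneg ha (sq_nonneg _)), chiProfileDeriv]
  calc _ = 2 * (a * chiProfile a (‖x‖ ^ 2) * logWeight (‖x‖ ^ 2)) * (‖x‖ / (‖x‖ ^ 2 + 1)) :=
        by ring
    _ ≤ 2 * (a * chiProfile a (‖x‖ ^ 2) * logWeight (‖x‖ ^ 2)) * (1 / √(‖x‖ ^ 2 + 1)) := by
        gcongr
    _ = _ := by ring

theorem norm_fderiv_fderiv_chiProfile_le (ha : 0 ≤ a) (x : E) :
    ‖fderiv ℝ (fderiv ℝ (fun y : E => chiProfile a (‖y‖ ^ 2))) x‖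
      ≤ 2 * a * (2 * a + 3) * chiProfile a (‖x‖ ^ 2) * logWeight (‖x‖ ^ 2) ^ 2
        / (‖x‖ ^ 2 + 1) := by
  have hr : 0 ≤ ‖x‖ ^ 2 := sq_nonneg _
  refine (norm_fderiv_fderiv_comp_norm_sq_le (fun s hs => hasDerivAt_chiProfile (by linarith))
    (hasDerivAt_chiProfileDeriv (by linarith))).trans ?_
  set r := ‖x‖ ^ 2
  have hℓ : 1 ≤ logWeight r := one_le_logWeight hr
  have hF : 0 < chiProfile a r := Real.exp_pos _
  have hM : |a * logWeight r ^ 2 + 1 / 2 - logWeight r| ≤ (a + 1) * logWeight r ^ 2 := by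
    rw [abs_le]; constructor <;> nlinarith
  have hr1 : r / (r + 1) ≤ 1 := by rw [div_le_one (by linarith)]; linarith
  rw [abs_of_nonneg (chiProfileDeriv_nonneg ha hr), chiProfileDeriv, abs_div, abs_mul, abs_mul,
    abs_of_nonneg ha, abs_of_pos hF, abs_of_pos (by positivity : (0 : ℝ) < (r + 1) ^ 2)]
  calc _ = a * chiProfile a r / (r + 1)
          * (2 * logWeight r
            + 4 * |a * logWeight r ^ 2 + 1 / 2 - logWeight r| * (r / (r + 1))) := by
        field_simp
    _ ≤ a * chiProfile a r / (r + 1)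
          * (2 * logWeight r ^ 2 + 4 * ((a + 1) * logWeight r ^ 2) * 1) := by
        gcongr
        nlinarith
    _ = _ := by ring

end ChiProfileBounds

theorem mul_sub_add_mem_Icc {T A C₁ t : ℝ} (hC₁ : 0 < C₁) (ht : t ∈ Icc (T - A / C₁) T) :
    C₁ * (T - t) + A ∈ Icc A (2 * A) := by
  have h : C₁ * (T - t) ≤ A := (le_div_iff₀' hC₁).1 (by linarith [ht.1])
  constructor <;> nlinarith [ht.2]

/-- Derivative bounds for `χ`, uniform in `C₁`: for every `Ã > 0` there is a
constant `C > 0` (depending only on `Ã` and the dimension) such that, for all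
`T > 0`, `C₁ > 0`, `t ∈ [max(T − Ã/C₁, 0), T]` and `x ∈ ℝⁿ`,
`|Dχ(t,x)| ≤ C χ(t,x) ψ(x)^{1/2}/(|x|²+1)^{1/2}` and
`‖D²χ(t,x)‖ ≤ C χ(t,x) ψ(x)/(|x|²+1)`. -/
theorem chi_derivative_bounds (n : ℕ) :
    ∀ A : ℝ, 0 < A → ∃ C : ℝ, 0 < C ∧
      ∀ T : ℝ, 0 < T → ∀ C₁ : ℝ, 0 < C₁ →
        ∀ t ∈ Icc (max (T - A / C₁) 0) T, ∀ x : Vec n,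
          ‖fderiv ℝ (fun y : Vec n => chi T A C₁ t y) x‖
              ≤ C * chi T A C₁ t x * Real.sqrt (psi x) / Real.sqrt (‖x‖ ^ 2 + 1) ∧
          ‖fderiv ℝ (fun y : Vec n => fderiv ℝ (fun z : Vec n => chi T A C₁ t z) y) x‖
              ≤ C * chi T A C₁ t x * psi x / (‖x‖ ^ 2 + 1) := by
  intro A hA
  refine ⟨(4 * A + 3) ^ 2, by positivity, fun T _ C₁ hC₁ t ht x => ?_⟩
  obtain ⟨haA, ha2A⟩ := mul_sub_add_mem_Icc hC₁ ⟨(le_max_left _ _).trans ht.1, ht.2⟩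
  set a := C₁ * (T - t) + A
  have ha : 0 ≤ a := by linarith
  have hχ : 0 ≤ chi T A C₁ t x := (Real.exp_pos _).le
  have hψ : 0 ≤ psi x := sq_nonneg _
  have hℓ : 0 ≤ logWeight (‖x‖ ^ 2) := zero_le_one.trans (one_le_logWeight (sq_nonneg _))
  have hsqrt : √(psi x) = logWeight (‖x‖ ^ 2) := Real.sqrt_sq hℓ
  constructor
  · calc _ ≤ 2 * a * chi T A C₁ t x * logWeight (‖x‖ ^ 2) / √(‖x‖ ^ 2 + 1) :=
          norm_fderiv_chiProfile_le ha x
      _ ≤ _ := by rw [hsqrt]; gcongr; nlinarith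
  · calc _ ≤ 2 * a * (2 * a + 3) * chi T A C₁ t x * psi x / (‖x‖ ^ 2 + 1) :=
          norm_fderiv_fderiv_chiProfile_le ha x
      _ ≤ _ := by gcongr; nlinarith

end
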